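/- arXiv:2110.13405 — 6 statements merged into one kernel-verified Lean document; each statement's English description precedes it below -/
import Mathlib

section
/- For all integers x, one has Δ(x) = −Δ(N_0 − x). -/
/-!
Write `c i = P / a i`. Reducing the defining relation `e₀ P + ∑ b_j c_j = -1` modulo `a i`
(every `c_j` with `j ≠ i` is a multiple of `a i`) gives `b_i c_i ≡ -1`, while
`N₀ ≡ -c_i`; hence `N₀ b_i = a_i s_i + 1` for an integer `s_i`. For integers `m + m' = a s + 1`
one has `⌈m / a⌉ + ⌈m' / a⌉ = s + 1`, so `Δ x + Δ (N₀ - x) = 2 + |e₀| N₀ - ∑ (s_i + 1)`, and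
multiplying `∑ s_i` by `P` evaluates it to `-e₀ N₀ - (n - 2)`. Since `e₀ < 0`, everything cancels.
-/

open Finset

theorem ceil_div_add_ceil_div_of_add_eq {a s m m' : ℤ} (ha : 0 < a) (h : m + m' = a * s + 1) :
    ⌈(m : ℚ) / a⌉ + ⌈(m' : ℚ) / a⌉ = s + 1 := by
  have haQ : (0 : ℚ) < a := by exact_mod_cast ha
  set t := ⌈(m : ℚ) / a⌉
  have hle : m ≤ a * t := by
    have := Int.le_ceil ((m : ℚ) / a)
    rw [div_le_iff₀ haQ] at this
    exact_mod_cast (by linarith : (m : ℚ) ≤ a * t)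
  have hlt : a * t < m + a := by
    have := Int.ceil_lt_add_one ((m : ℚ) / a)
    rw [← sub_lt_iff_lt_add, lt_div_iff₀ haQ] at this
    exact_mod_cast (by linarith : (a * t : ℚ) < m + a)
  rw [← eq_sub_iff_add_eq', Int.ceil_eq_iff, lt_div_iff₀ haQ, div_le_iff₀ haQ]
  constructor
  · exact_mod_cast (by linarith : (s + 1 - t - 1) * a < m')
  · exact_mod_cast (by linarith : m' ≤ (s + 1 - t) * a)

section SeifertInvariants

variable {ι : Type*} [Fintype ι] {a b : ι → ℤ} {P e₀ : ℤ}

theorem dvd_prod_div_of_ne {i j : ι} (hj : a j ≠ 0) (hij : i ≠ j) :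
    a i ∣ (∏ k, a k) / a j := by
  classical
  rw [← mul_prod_erase univ a (mem_univ j), Int.mul_ediv_cancel_left _ hj]
  exact dvd_prod_of_mem a (mem_erase.2 ⟨hij, mem_univ i⟩)

theorem sum_mul_prod_div_modEq (ha : ∀ i, a i ≠ 0) (hP : P = ∏ k, a k) (f : ι → ℤ) (i : ι) :
    ∑ j, f j * (P / a j) ≡ f i * (P / a i) [ZMOD a i] := by
  classical
  rw [← add_sum_erase univ _ (mem_univ i), add_comm, Int.add_modEq_right_iff]
  exact dvd_sum fun j hj => (hP ▸ dvd_prod_div_of_ne (ha j) (ne_of_mem_erase hj).symm).mul_left _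

variable (heq : e₀ * P + ∑ i, b i * (P / a i) = -1)
include heq

theorem neg_of_mul_add_sum_eq_neg_one (ha : ∀ i, 0 < a i) (hb : ∀ i, 0 ≤ b i)
    (hP : P = ∏ k, a k) : e₀ < 0 := by
  have hPpos : 0 < P := hP ▸ prod_pos fun i _ => ha i
  have hsum : 0 ≤ ∑ i, b i * (P / a i) :=
    sum_nonneg fun i _ => mul_nonneg (hb i) (Int.ediv_nonneg hPpos.le (ha i).le)
  by_contra! h
  nlinarith

theorem mul_modEq_one (ha : ∀ i, a i ≠ 0) (hP : P = ∏ k, a k) (t : ℤ) (i : ι) :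
    (t * P - ∑ j, P / a j) * b i ≡ 1 [ZMOD a i] := by
  have hP0 : P ≡ 0 [ZMOD a i] := Int.modEq_zero_iff_dvd.2 (hP ▸ dvd_prod_of_mem a (mem_univ i))
  have hone : ∑ j, P / a j ≡ P / a i [ZMOD a i] := by
    simpa using sum_mul_prod_div_modEq ha hP 1 i
  have hbc : b i * (P / a i) ≡ -1 [ZMOD a i] :=
    calc b i * (P / a i) ≡ ∑ j, b j * (P / a j) [ZMOD a i] :=
          (sum_mul_prod_div_modEq ha hP b i).symm
      _ = -1 - e₀ * P := by linarith
      _ ≡ -1 - e₀ * 0 [ZMOD a i] := (hP0.mul_left e₀).sub_left _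
      _ = -1 := by ring
  calc (t * P - ∑ j, P / a j) * b i ≡ (t * 0 - P / a i) * b i [ZMOD a i] :=
        ((hP0.mul_left t).sub hone).mul_right _
    _ = -(b i * (P / a i)) := by ring
    _ ≡ -(-1) [ZMOD a i] := hbc.neg
    _ = 1 := by ring

theorem sum_eq_of_mul_eq_mul_sub_one (ha : ∀ i, a i ≠ 0) (hP : P = ∏ k, a k) {t N : ℤ}
    (hN : N = t * P - ∑ j, P / a j) {s : ι → ℤ} (hs : ∀ i, a i * s i = N * b i - 1) :
    ∑ i, s i = -e₀ * N - t := by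
  have hP0 : P ≠ 0 := hP ▸ prod_ne_zero_iff.2 fun i _ => ha i
  have hPs : ∀ i, P * s i = P / a i * (N * b i - 1) := fun i => by
    rw [← hs i, ← mul_assoc, Int.ediv_mul_cancel (hP ▸ dvd_prod_of_mem a (mem_univ i))]
  refine mul_left_cancel₀ hP0 ?_
  calc P * ∑ i, s i = N * ∑ i, b i * (P / a i) - ∑ i, P / a i := by
        simp only [mul_sum, hPs, ← sum_sub_distrib]
        exact sum_congr rfl fun i _ => by ring
    _ = P * (-e₀ * N - t) := by
        rw [show ∑ i, b i * (P / a i) = -1 - e₀ * P by linarith]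
        linear_combination -hN

end SeifertInvariants

def seifertDelta {ι : Type*} [Fintype ι] (e₀ : ℤ) (a b : ι → ℤ) (x : ℤ) : ℤ :=
  1 + |e₀| * x - ∑ i, ⌈(x * b i : ℚ) / (a i : ℚ)⌉

theorem seifertDelta_add_seifertDelta_sub {ι : Type*} [Fintype ι] {a b : ι → ℤ} {P e₀ N : ℤ}
    (ha : ∀ i, 0 < a i) (hb : ∀ i, 0 ≤ b i) (hP : P = ∏ k, a k)
    (heq : e₀ * P + ∑ i, b i * (P / a i) = -1)
    (hN : N = (Fintype.card ι - 2) * P - ∑ i, P / a i) (x : ℤ) :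
    seifertDelta e₀ a b x + seifertDelta e₀ a b (N - x) = 0 := by
  have ha₀ : ∀ i, a i ≠ 0 := fun i => (ha i).ne'
  obtain ⟨s, hs⟩ : ∃ s : ι → ℤ, ∀ i, a i * s i = N * b i - 1 := by
    choose s hs using fun i => (hN ▸ mul_modEq_one heq ha₀ hP _ i).symm.dvd
    exact ⟨s, fun i => (hs i).symm⟩
  have hpair (i : ι) :
      ⌈(x * b i : ℚ) / a i⌉ + ⌈((N - x : ℤ) * b i : ℚ) / a i⌉ = s i + 1 := by
    exact_mod_cast ceil_div_add_ceil_div_of_add_eq (ha i) (m := x * b i) (m' := (N - x) * b i)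
      (by linear_combination -hs i)
  have hsum : ∑ i, (⌈(x * b i : ℚ) / a i⌉ + ⌈((N - x : ℤ) * b i : ℚ) / a i⌉) =
      ∑ i, s i + Fintype.card ι := by
    rw [sum_congr rfl fun i _ => hpair i, sum_add_distrib]
    simp
  rw [sum_add_distrib, sum_eq_of_mul_eq_mul_sub_one heq ha₀ hP hN hs] at hsum
  simp only [seifertDelta, abs_of_neg (neg_of_mul_add_sum_eq_neg_one heq ha hb hP)]
  linarith

theorem stmt_2_general (n : ℕ) (a : Fin n → ℤ)
    (ha : ∀ i, 2 ≤ a i)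
    (P : ℤ) (hP : P = ∏ i, a i)
    (e0 : ℤ) (b : Fin n → ℤ)
    (hb : ∀ i, 1 ≤ b i ∧ b i < a i)
    (heq : e0 * P + ∑ i, b i * (P / a i) = -1)
    (Δ : ℤ → ℤ)
    (hΔ : ∀ x : ℤ, Δ x = 1 + |e0| * x - ∑ i, ⌈(x * b i : ℚ) / (a i : ℚ)⌉)
    (N0 : ℤ) (hN0 : N0 = ((n : ℤ) - 2) * P - ∑ i, P / a i) :
    ∀ x : ℤ, Δ x = -Δ (N0 - x) := by
  intro x
  have hsymm := seifertDelta_add_seifertDelta_sub (fun i => by linarith [ha i])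
    (fun i => by linarith [(hb i).1]) hP heq (by simpa using hN0) x
  rw [hΔ, hΔ]
  exact eq_neg_of_add_eq_zero_left hsymm

/-- For all integers x, Δ(x) = −Δ(N_0 − x). -/
theorem stmt_2 (n : ℕ) (hn : 3 ≤ n) (a : Fin n → ℤ)
    (ha : ∀ i, 2 ≤ a i)
    (hcop : ∀ i j, i ≠ j → IsCoprime (a i) (a j))
    (P : ℤ) (hP : P = ∏ i, a i)
    (e0 : ℤ) (b : Fin n → ℤ)
    (hb : ∀ i, 1 ≤ b i ∧ b i < a i)
    (heq : e0 * P + ∑ i, b i * (P / a i) = -1)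
    (Δ : ℤ → ℤ)
    (hΔ : ∀ x : ℤ, Δ x = 1 + |e0| * x - ∑ i, ⌈(x * b i : ℚ) / (a i : ℚ)⌉)
    (N0 : ℤ) (hN0 : N0 = ((n : ℤ) - 2) * P - ∑ i, P / a i) :
    ∀ x : ℤ, Δ x = -Δ (N0 - x) :=
  stmt_2_general n a ha P hP e0 b hb heq Δ hΔ N0 hN0
end

section
/- For all integers x, one has Δ(x) ≥ 1 if and only if x ∈ G, i.e. if and only if x can be written as Σ_{i=1}^n x_i·(P/a_i) with all x_i nonnegative integers. -/
/-!
Write `Q i = P / a i = ∏_{j ≠ i} a j` and let `r i ∈ [0, a i)` be the residue of `-x * b i` modulo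
`a i`, so that `a i * ⌈x * b i / a i⌉ = x * b i + r i`. Multiplying by `Q i`, summing, and using
`e₀ P + ∑ b i Q i = -1` (which forces `e₀ < 0`) gives the normal form `x = ∑ r i Q i + (Δ x - 1) P`.

If `x = ∑ c i Q i` with `c i ≥ 0`, then reducing modulo `a i` kills every `Q j` with `j ≠ i` and
`Q i` is a unit, so `c i ≡ r i`; as `c i ≥ 0 > r i - a i` this forces `c i ≥ r i`, whence
`(Δ x - 1) P = ∑ (c i - r i) Q i ≥ 0`. Conversely, if `Δ x ≥ 1` the surplus
`(Δ x - 1) P = (Δ x - 1) a i₀ Q i₀` is absorbed into the coefficient of a single `Q i₀`.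
-/

open Finset Function

lemma Int.mul_ceil_div_eq_add_neg_emod {d : ℤ} (hd : 0 < d) (m : ℤ) :
    d * ⌈(m : ℚ) / d⌉ = m + (-m) % d := by
  lift d to ℕ using hd.le
  rw [Int.cast_natCast, Rat.ceil_intCast_div_natCast]
  linarith [Int.emod_def (-m) d]

lemma Int.le_of_dvd_sub_of_lt {a c r : ℤ} (h : a ∣ c - r) (hc : 0 ≤ c) (hr : r < a) : r ≤ c := by
  by_contra! hcr
  have := Int.eq_zero_of_abs_lt_dvd h (by rw [abs_lt]; constructor <;> omega)
  omega

section Cofactor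

variable {ι : Type*} [Fintype ι] [DecidableEq ι]

def cofactor (a : ι → ℤ) (i : ι) : ℤ := ∏ j ∈ univ.erase i, a j

variable {a : ι → ℤ}

lemma mul_cofactor (i : ι) : a i * cofactor a i = ∏ j, a j :=
  mul_prod_erase _ _ (mem_univ i)

lemma prod_ediv_eq_cofactor (ha : ∀ i, a i ≠ 0) (i : ι) : (∏ j, a j) / a i = cofactor a i := by
  rw [← mul_cofactor i, Int.mul_ediv_cancel_left _ (ha i)]

lemma cofactor_pos (ha : ∀ i, 0 < a i) (i : ι) : 0 < cofactor a i :=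
  prod_pos fun j _ => ha j

lemma dvd_cofactor {i j : ι} (hij : i ≠ j) : a i ∣ cofactor a j :=
  dvd_prod_of_mem a (mem_erase.2 ⟨hij, mem_univ i⟩)

lemma isCoprime_cofactor (hcop : Pairwise (IsCoprime on a)) (i : ι) :
    IsCoprime (a i) (cofactor a i) :=
  IsCoprime.prod_right fun _ hj => hcop (mem_erase.1 hj).1.symm

lemma dvd_sum_mul_cofactor_iff (hcop : Pairwise (IsCoprime on a)) (d : ι → ℤ) (i : ι) :
    a i ∣ ∑ j, d j * cofactor a j ↔ a i ∣ d i := by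
  rw [← add_sum_erase _ _ (mem_univ i),
    dvd_add_left (dvd_sum fun j hj => (dvd_cofactor (mem_erase.1 hj).1.symm).mul_left _)]
  exact ⟨(isCoprime_cofactor hcop i).dvd_of_dvd_mul_right, fun h => h.mul_right _⟩

theorem exists_eq_sum_mul_cofactor_iff [Nonempty ι] (ha : ∀ i, 0 < a i)
    (hcop : Pairwise (IsCoprime on a)) {r : ι → ℤ} (hr₀ : ∀ i, 0 ≤ r i) (hr : ∀ i, r i < a i)
    {x m : ℤ} (hx : x = ∑ i, r i * cofactor a i + m * ∏ j, a j) :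
    (∃ c : ι → ℕ, x = ∑ i, (c i : ℤ) * cofactor a i) ↔ 0 ≤ m := by
  constructor
  · rintro ⟨c, hc⟩
    have hdiff : ∑ i, ((c i : ℤ) - r i) * cofactor a i = m * ∏ j, a j := by
      simp only [sub_mul, sum_sub_distrib]
      linarith
    have hle : ∀ i, r i ≤ c i := fun i =>
      Int.le_of_dvd_sub_of_lt ((dvd_sum_mul_cofactor_iff hcop _ i).1
        (hdiff ▸ (dvd_prod_of_mem a (mem_univ i)).mul_left m)) (Nat.cast_nonneg _) (hr i)
    have hnonneg : 0 ≤ m * ∏ j, a j := hdiff ▸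
      sum_nonneg fun i _ => mul_nonneg (sub_nonneg.2 (hle i)) (cofactor_pos ha i).le
    exact nonneg_of_mul_nonneg_left hnonneg (prod_pos fun j _ => ha j)
  · intro hm
    obtain ⟨i₀⟩ := ‹Nonempty ι›
    have hnonneg : ∀ i, 0 ≤ r i + if i = i₀ then m * a i else 0 := fun i => by
      split_ifs
      exacts [add_nonneg (hr₀ i) (mul_nonneg hm (ha i).le), by simpa using hr₀ i]
    refine ⟨fun i => (r i + if i = i₀ then m * a i else 0).toNat, ?_⟩
    simp only [Int.toNat_of_nonneg (hnonneg _), add_mul, sum_add_distrib, ite_mul, zero_mul,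
      sum_ite_eq', if_pos (mem_univ _), hx, ← mul_cofactor i₀]
    ring

lemma eq_sum_emod_mul_cofactor_add (ha : ∀ i, 0 < a i) {e₀ : ℤ} {b : ι → ℤ}
    (heq : e₀ * ∏ j, a j + ∑ i, b i * cofactor a i = -1) (x : ℤ) :
    x = ∑ i, (-(x * b i)) % a i * cofactor a i
      + (-e₀ * x - ∑ i, ⌈(x * b i : ℚ) / (a i : ℚ)⌉) * ∏ j, a j := by
  have hceil : ∀ i, ⌈(x * b i : ℚ) / (a i : ℚ)⌉ * ∏ j, a j
      = (x * b i + (-(x * b i)) % a i) * cofactor a i := fun i => by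
    rw [← mul_cofactor i, ← Int.mul_ceil_div_eq_add_neg_emod (ha i)]
    push_cast
    ring
  rw [sub_mul, sum_mul, sum_congr rfl fun i _ => hceil i]
  simp only [add_mul, sum_add_distrib, mul_assoc, ← mul_sum]
  linear_combination x * heq

end Cofactor

/-- For all integers x, Δ(x) ≥ 1 iff x lies in the numerical semigroup G generated by the P/a_i. -/
theorem stmt_3 (n : ℕ) (hn : 3 ≤ n) (a : Fin n → ℤ)
    (ha : ∀ i, 2 ≤ a i)
    (hcop : ∀ i j, i ≠ j → IsCoprime (a i) (a j))
    (P : ℤ) (hP : P = ∏ i, a i)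
    (e0 : ℤ) (b : Fin n → ℤ)
    (hb : ∀ i, 1 ≤ b i ∧ b i < a i)
    (heq : e0 * P + ∑ i, b i * (P / a i) = -1)
    (Δ : ℤ → ℤ)
    (hΔ : ∀ x : ℤ, Δ x = 1 + |e0| * x - ∑ i, ⌈(x * b i : ℚ) / (a i : ℚ)⌉) :
    ∀ x : ℤ, (1 ≤ Δ x ↔ ∃ c : Fin n → ℕ, x = ∑ i, (c i : ℤ) * (P / a i)) := by
  have ha₀ : ∀ i, 0 < a i := fun i => by linarith [ha i]
  have hcofactor : ∀ i, P / a i = cofactor a i :=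
    hP ▸ prod_ediv_eq_cofactor fun i => (ha₀ i).ne'
  simp only [hcofactor] at heq ⊢
  subst hP
  have he₀ : e0 < 0 := by
    have hsum : 0 ≤ ∑ i, b i * cofactor a i :=
      sum_nonneg fun i _ => mul_nonneg (by linarith [hb i]) (cofactor_pos ha₀ i).le
    nlinarith [prod_pos fun i (_ : i ∈ univ) => ha₀ i]
  have : Nonempty (Fin n) := ⟨⟨0, by omega⟩⟩
  intro x
  rw [exists_eq_sum_mul_cofactor_iff ha₀ (fun i j => hcop i j)
    (fun i => Int.emod_nonneg _ (ha₀ i).ne') (fun i => Int.emod_lt_of_pos _ (ha₀ i))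
    (eq_sum_emod_mul_cofactor_add ha₀ heq x), hΔ, abs_of_neg he₀]
  constructor <;> intro h <;> linarith
end

section
/- If x_1, …, x_n are nonnegative integers and x = Σ_{i=1}^n x_i·(P/a_i), then Δ(x) = 1 + Σ_{i=1}^n ⌊x_i/a_i⌋. -/
/-!
Write `Q i = P / a i` and `x = ∑ c i * Q i`. Modulo `a i` every `Q j` with `j ≠ i` vanishes and the
defining relation `e0 * P + ∑ b j * Q j = -1` gives `b i * Q i ≡ -1`, so `a i ∣ x * b i + c i`.
With `t i = (x * b i + c i) / a i` this yields `⌈x * b i / a i⌉ = t i - ⌊c i / a i⌋`, while multiplying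
`∑ t i` by `P` and using the relation once more shows `∑ t i = -e0 * x = |e0| * x`.
-/

open Finset

theorem Int.ceil_div_eq_ediv_sub_floor {y c a : ℤ} (h : a ∣ y + c) :
    ⌈(y : ℚ) / a⌉ = (y + c) / a - ⌊(c : ℚ) / a⌋ := by
  obtain ⟨t, ht⟩ := h
  rcases eq_or_ne a 0 with rfl | ha
  · simp
  have hy : (y : ℚ) / a = -((c : ℚ) / a) + t := by
    rw [show y = a * t - c by linarith]
    push_cast
    field_simp
    ring
  rw [hy, Int.ceil_add_intCast, Int.ceil_neg, ht, Int.mul_ediv_cancel_left _ ha]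
  ring

section Product

variable {ι : Type*} [Fintype ι] [DecidableEq ι] (a : ι → ℤ)

theorem prod_ediv_eq_prod_erase {i : ι} (hi : a i ≠ 0) :
    (∏ j, a j) / a i = ∏ j ∈ univ.erase i, a j := by
  rw [← mul_prod_erase univ a (mem_univ i), Int.mul_ediv_cancel_left _ hi]

theorem dvd_prod_ediv_of_ne {i j : ι} (hij : i ≠ j) (hj : a j ≠ 0) :
    a i ∣ (∏ k, a k) / a j := by
  rw [prod_ediv_eq_prod_erase a hj]
  exact dvd_prod_of_mem a (mem_erase.mpr ⟨hij, mem_univ i⟩)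

theorem dvd_sum_mul_prod_ediv_sub (ha : ∀ j, a j ≠ 0) (w : ι → ℤ) (i : ι) :
    a i ∣ ∑ j, w j * ((∏ k, a k) / a j) - w i * ((∏ k, a k) / a i) := by
  rw [← sum_erase_eq_sub (mem_univ i)]
  exact dvd_sum fun j hj =>
    dvd_mul_of_dvd_right (dvd_prod_ediv_of_ne a (ne_of_mem_erase hj).symm (ha j)) _

variable {a} (ha : ∀ j, a j ≠ 0) {e0 : ℤ} {b : ι → ℤ}
  (heq : e0 * ∏ j, a j + ∑ j, b j * ((∏ k, a k) / a j) = -1) (c : ι → ℤ)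
include ha heq

theorem dvd_mul_add_of_sum_eq_neg_one (i : ι) :
    a i ∣ (∑ j, c j * ((∏ k, a k) / a j)) * b i + c i := by
  have hP : a i ∣ ∏ k, a k := dvd_prod_of_mem a (mem_univ i)
  have hsplit : (∑ j, c j * ((∏ k, a k) / a j)) * b i + c i
      = b i * (∑ j, c j * ((∏ k, a k) / a j) - c i * ((∏ k, a k) / a i))
        - c i * (∑ j, b j * ((∏ k, a k) / a j) - b i * ((∏ k, a k) / a i))
        - c i * e0 * ∏ k, a k := by
    linear_combination c i * heq
  rw [hsplit]
  exact dvd_sub (dvd_sub (dvd_mul_of_dvd_right (dvd_sum_mul_prod_ediv_sub a ha c i) _)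
    (dvd_mul_of_dvd_right (dvd_sum_mul_prod_ediv_sub a ha b i) _)) (dvd_mul_of_dvd_right hP _)

theorem sum_ediv_eq_neg_mul_of_sum_eq_neg_one :
    ∑ i, ((∑ j, c j * ((∏ k, a k) / a j)) * b i + c i) / a i
      = -e0 * ∑ j, c j * ((∏ k, a k) / a j) := by
  set x := ∑ j, c j * ((∏ k, a k) / a j)
  have hterm : ∀ i,
      (∏ k, a k) * ((x * b i + c i) / a i) = (x * b i + c i) * ((∏ k, a k) / a i) := by
    intro i
    rw [← Int.mul_ediv_assoc _ (dvd_mul_add_of_sum_eq_neg_one ha heq c i), mul_comm,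
      Int.mul_ediv_assoc _ (dvd_prod_of_mem a (mem_univ i))]
  apply mul_left_cancel₀ (prod_ne_zero_iff.mpr fun i _ => ha i)
  rw [mul_sum, sum_congr rfl fun i _ => hterm i]
  simp only [add_mul, sum_add_distrib, mul_assoc, ← mul_sum]
  linear_combination x * heq

end Product

theorem stmt_4_general (n : ℕ) (a : Fin n → ℤ)
    (ha : ∀ i, 2 ≤ a i)
    (P : ℤ) (hP : P = ∏ i, a i)
    (e0 : ℤ) (b : Fin n → ℤ)
    (hb : ∀ i, 1 ≤ b i ∧ b i < a i)
    (heq : e0 * P + ∑ i, b i * (P / a i) = -1)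
    (Δ : ℤ → ℤ)
    (hΔ : ∀ x : ℤ, Δ x = 1 + |e0| * x - ∑ i, ⌈(x * b i : ℚ) / (a i : ℚ)⌉) :
    ∀ c : Fin n → ℕ, Δ (∑ i, (c i : ℤ) * (P / a i)) = 1 + ∑ i, ⌊((c i : ℚ)) / ((a i : ℚ))⌋ := by
  intro c
  subst hP
  have ha0 : ∀ i, a i ≠ 0 := fun i => by linarith [ha i]
  have he0 : e0 < 0 := by
    have hP : 0 < ∏ i, a i := prod_pos fun i _ => by linarith [ha i]
    have hsum : 0 ≤ ∑ i, b i * ((∏ k, a k) / a i) := sum_nonneg fun i _ =>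
      mul_nonneg (by linarith [hb i]) (Int.ediv_nonneg hP.le (by linarith [ha i]))
    nlinarith
  set x := ∑ i, (c i : ℤ) * ((∏ k, a k) / a i)
  have hceil : ∀ i, ⌈(x * b i : ℚ) / a i⌉ = (x * b i + c i) / a i - ⌊(c i : ℚ) / a i⌋ := fun i => by
    exact_mod_cast Int.ceil_div_eq_ediv_sub_floor (dvd_mul_add_of_sum_eq_neg_one ha0 heq _ i)
  rw [hΔ, sum_congr rfl fun i _ => hceil i, sum_sub_distrib,
    sum_ediv_eq_neg_mul_of_sum_eq_neg_one ha0 heq, abs_of_neg he0]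
  ring

/-- If x = Σ x_i·(P/a_i) with x_i nonnegative integers, then Δ(x) = 1 + Σ ⌊x_i/a_i⌋. -/
theorem stmt_4 (n : ℕ) (hn : 3 ≤ n) (a : Fin n → ℤ)
    (ha : ∀ i, 2 ≤ a i)
    (hcop : ∀ i j, i ≠ j → IsCoprime (a i) (a j))
    (P : ℤ) (hP : P = ∏ i, a i)
    (e0 : ℤ) (b : Fin n → ℤ)
    (hb : ∀ i, 1 ≤ b i ∧ b i < a i)
    (heq : e0 * P + ∑ i, b i * (P / a i) = -1)
    (Δ : ℤ → ℤ)
    (hΔ : ∀ x : ℤ, Δ x = 1 + |e0| * x - ∑ i, ⌈(x * b i : ℚ) / (a i : ℚ)⌉) :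
    ∀ c : Fin n → ℕ, Δ (∑ i, (c i : ℤ) * (P / a i)) = 1 + ∑ i, ⌊((c i : ℚ)) / ((a i : ℚ))⌋ :=
  stmt_4_general n a ha P hP e0 b hb heq Δ hΔ
end

section
/- If s is an integer with s ∈ H and s − α ∉ H, then Δ(s·a_n) = 1. -/
/-!
Write `s = ∑ cᵢ (α / aᵢ)`. Since `aᵢ (α / aᵢ) = α`, the hypothesis `s - α ∉ H` forces
`0 ≤ cᵢ < aᵢ`. Reducing the defining relation modulo `aᵢ` gives `aₙ bᵢ (α / aᵢ) ≡ -1`, hence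
`s aₙ bᵢ ≡ -cᵢ (mod aᵢ)`, so `⌈s aₙ bᵢ / aᵢ⌉ = (s aₙ bᵢ + cᵢ) / aᵢ` exactly. Summing these over the
common denominator `α` and using the defining relation once more, the ceilings add up to
`-s (e₀ aₙ + bₙ)`, so `Δ(s aₙ) = 1 + (|e₀| + e₀) s aₙ = 1` because `e₀ < 0`.
-/

open Finset

theorem Int.ceil_intCast_div_of_dvd_add {K : Type*} [Field K] [LinearOrder K]
    [IsStrictOrderedRing K] [FloorRing K] {m a r : ℤ} (ha : 0 < a) (hr₀ : 0 ≤ r) (hra : r < a)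
    (hdvd : a ∣ m + r) : ⌈(m : K) / a⌉ = (m + r) / a := by
  obtain ⟨q, hq⟩ := hdvd
  have ha' : (0 : K) < a := by exact_mod_cast ha
  rw [hq, Int.mul_ediv_cancel_left q ha.ne', Int.ceil_eq_iff, lt_div_iff₀ ha', div_le_iff₀ ha']
  constructor
  · exact_mod_cast (show (q - 1) * a < m by linarith)
  · exact_mod_cast (show m ≤ q * a by linarith)

theorem coeff_lt_of_sub_not_repr {ι : Type*} [Fintype ι] [DecidableEq ι] {a g : ι → ℤ} {α s : ℤ}
    {c : ι → ℕ} (ha : ∀ i, 0 ≤ a i) (hg : ∀ i, a i * g i = α) (hs : s = ∑ i, (c i : ℤ) * g i)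
    (hns : ¬ ∃ c' : ι → ℕ, s - α = ∑ i, (c' i : ℤ) * g i) (i : ι) : (c i : ℤ) < a i := by
  by_contra! hle
  have hai : ((a i).toNat : ℤ) = a i := Int.toNat_of_nonneg (ha i)
  have hle' : (a i).toNat ≤ c i := by omega
  refine hns ⟨Function.update c i (c i - (a i).toNat), ?_⟩
  have hterm : ∀ j, ((Function.update c i (c i - (a i).toNat) j : ℕ) : ℤ) * g j
      = c j * g j - if j = i then α else 0 := by
    intro j
    rcases eq_or_ne j i with rfl | hj
    · rw [Function.update_self, if_pos rfl, Nat.cast_sub hle', hai, ← hg j]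
      ring
    · rw [Function.update_of_ne hj, if_neg hj, sub_zero]
  simp only [hterm, sum_sub_distrib, sum_ite_eq', mem_univ, if_true, hs]

section ProdErase

variable {ι R : Type*} [Fintype ι] [DecidableEq ι] [CommRing R] (a : ι → R)

theorem mul_prod_univ_erase (i : ι) : a i * ∏ j ∈ univ.erase i, a j = ∏ j, a j :=
  mul_prod_erase _ _ (mem_univ i)

theorem dvd_sum_mul_prod_univ_erase_sub (f : ι → R) (i : ι) :
    a i ∣ ∑ j, f j * ∏ k ∈ univ.erase j, a k - f i * ∏ k ∈ univ.erase i, a k := by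
  rw [← add_sum_erase _ _ (mem_univ i), add_sub_cancel_left]
  exact dvd_sum fun j hj =>
    (dvd_prod_of_mem a (mem_erase.2 ⟨(ne_of_mem_erase hj).symm, mem_univ i⟩)).mul_left _

theorem dvd_sum_mul_prod_univ_erase_mul_add (b c : ι → R) (u : R) (i : ι)
    (hu : a i ∣ u * ∑ j, b j * ∏ k ∈ univ.erase j, a k + 1) :
    a i ∣ (∑ j, c j * ∏ k ∈ univ.erase j, a k) * u * b i + c i := by
  obtain ⟨x, hx⟩ := dvd_sum_mul_prod_univ_erase_sub a c i
  obtain ⟨y, hy⟩ := dvd_sum_mul_prod_univ_erase_sub a b i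
  obtain ⟨z, hz⟩ := hu
  exact ⟨u * b i * x - c i * u * y + c i * z,
    by linear_combination u * b i * hx - c i * u * hy + c i * hz⟩

end ProdErase

theorem prod_mul_sum_ediv_of_dvd {ι : Type*} [Fintype ι] [DecidableEq ι] (a x : ι → ℤ)
    (h : ∀ i, a i ∣ x i) : (∏ j, a j) * ∑ i, x i / a i = ∑ i, x i * ∏ j ∈ univ.erase i, a j := by
  rw [mul_sum]
  refine sum_congr rfl fun i _ => ?_
  rw [← mul_prod_univ_erase a i, mul_comm (a i), mul_assoc, Int.mul_ediv_cancel' (h i), mul_comm]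

variable {K : Type*} [Field K] [LinearOrder K] [IsStrictOrderedRing K] [FloorRing K] in
theorem sum_ceil_mul_div_eq {ι : Type*} [Fintype ι] [DecidableEq ι] {a b : ι → ℤ} {c : ι → ℕ}
    {u k : ℤ} (ha : ∀ i, 0 < a i) (hc : ∀ i, (c i : ℤ) < a i)
    (hu : u * ∑ j, b j * ∏ l ∈ univ.erase j, a l + 1 = -(∏ j, a j) * k) :
    ∑ i, ⌈(((∑ j, (c j : ℤ) * ∏ l ∈ univ.erase j, a l) * u : ℤ) * b i : K) / a i⌉ =
      -(∑ j, (c j : ℤ) * ∏ l ∈ univ.erase j, a l) * k := by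
  set s := ∑ j, (c j : ℤ) * ∏ l ∈ univ.erase j, a l with hs
  have hdvd : ∀ i, a i ∣ s * u * b i + c i := fun i =>
    dvd_sum_mul_prod_univ_erase_mul_add a b (fun j => (c j : ℤ)) u i
      ⟨-(∏ l ∈ univ.erase i, a l) * k, by linear_combination hu + k * mul_prod_univ_erase a i⟩
  have hceil : ∀ i, ⌈((s * u : ℤ) * b i : K) / a i⌉ = (s * u * b i + c i) / a i := fun i => by
    rw [← Int.cast_mul]
    exact Int.ceil_intCast_div_of_dvd_add (ha i) (Nat.cast_nonneg _) (hc i) (hdvd i)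
  rw [sum_congr rfl fun i _ => hceil i]
  refine mul_left_cancel₀ (prod_pos (s := univ) fun i _ => ha i).ne' ?_
  have hsB : ∑ i, s * u * b i * ∏ l ∈ univ.erase i, a l =
      s * u * ∑ j, b j * ∏ l ∈ univ.erase j, a l := by
    simp only [mul_sum, mul_assoc]
  rw [prod_mul_sum_ediv_of_dvd a _ hdvd]
  simp only [add_mul, sum_add_distrib, ← hs, hsB]
  linear_combination s * hu

theorem stmt_5_general (n : ℕ) (a : Fin (n - 1) → ℤ) (an : ℤ)
    (ha : ∀ i, 2 ≤ a i) (han : 2 ≤ an)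
    (α P : ℤ) (hα : α = ∏ i, a i) (hP : P = α * an)
    (e0 : ℤ) (b : Fin (n - 1) → ℤ) (bn : ℤ)
    (hb : ∀ i, 1 ≤ b i ∧ b i < a i) (hbn : 1 ≤ bn ∧ bn < an)
    (heq : e0 * P + (∑ i, b i * (P / a i)) + bn * α = -1)
    (Δ : ℤ → ℤ)
    (hΔ : ∀ x : ℤ, Δ x = 1 + |e0| * x -
      ((∑ i, ⌈(x * b i : ℚ) / (a i : ℚ)⌉) + ⌈(x * bn : ℚ) / (an : ℚ)⌉)) :
    ∀ s : ℤ,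
      (∃ c : Fin (n - 1) → ℕ, s = ∑ i, (c i : ℤ) * (α / a i)) →
      ¬ (∃ c : Fin (n - 1) → ℕ, s - α = ∑ i, (c i : ℤ) * (α / a i)) →
      Δ (s * an) = 1 := by
  rintro s ⟨c, hc⟩ hns
  have ha₀ : ∀ i, 0 < a i := fun i => by linarith [ha i]
  have hαt : ∀ i, a i * ∏ j ∈ univ.erase i, a j = α := fun i => hα ▸ mul_prod_univ_erase a i
  have hdiv : ∀ i, α / a i = ∏ j ∈ univ.erase i, a j := fun i => by
    rw [← hαt i, Int.mul_ediv_cancel_left _ (ha₀ i).ne']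
  have hclt := coeff_lt_of_sub_not_repr (fun i => (ha₀ i).le) (fun i => hdiv i ▸ hαt i) hc hns
  simp only [hdiv] at hc
  set B := ∑ i, b i * ∏ j ∈ univ.erase i, a j
  have hrel : an * B + 1 = -α * (e0 * an + bn) := by
    have hPdiv : ∀ i, P / a i = (∏ j ∈ univ.erase i, a j) * an := fun i => by
      rw [hP, ← hαt i, mul_assoc, Int.mul_ediv_cancel_left _ (ha₀ i).ne']
    have : ∑ i, b i * (P / a i) = an * B := by
      simp only [hPdiv, B, mul_sum]
      exact sum_congr rfl fun i _ => by ring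
    linear_combination heq - this - e0 * hP
  have he0 : e0 < 0 := by
    have hαpos : 0 < α := hα ▸ prod_pos fun i _ => ha₀ i
    have hB : 0 ≤ B :=
      sum_nonneg fun i _ => mul_nonneg (by linarith [(hb i).1]) (prod_nonneg fun j _ => (ha₀ j).le)
    nlinarith [mul_pos hαpos (by linarith : (0 : ℤ) < an),
      mul_pos hαpos (by linarith [hbn.1] : (0 : ℤ) < bn),
      mul_nonneg (by linarith : (0 : ℤ) ≤ an) hB]
  have hceiln : ⌈((s * an : ℤ) * bn : ℚ) / (an : ℚ)⌉ = s * bn := by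
    rw [← Int.cast_mul, show s * an * bn = s * bn * an by ring, Int.cast_mul,
      mul_div_cancel_right₀ _ (by positivity), Int.ceil_intCast]
  rw [hΔ, hceiln, abs_of_neg he0, hc, sum_ceil_mul_div_eq ha₀ hclt (hα ▸ hrel)]
  ring

/-- If s ∈ H but s − α ∉ H, where H is the numerical semigroup generated by the α/a_i for i ∈ [1,n−1], then Δ(s·a_n) = 1. -/
theorem stmt_5 (n : ℕ) (hn : 3 ≤ n) (a : Fin (n - 1) → ℤ) (an : ℤ)
    (ha : ∀ i, 2 ≤ a i) (han : 2 ≤ an)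
    (hcop : ∀ i j, i ≠ j → IsCoprime (a i) (a j))
    (hcopn : ∀ i, IsCoprime (a i) an)
    (α P : ℤ) (hα : α = ∏ i, a i) (hP : P = α * an)
    (e0 : ℤ) (b : Fin (n - 1) → ℤ) (bn : ℤ)
    (hb : ∀ i, 1 ≤ b i ∧ b i < a i) (hbn : 1 ≤ bn ∧ bn < an)
    (heq : e0 * P + (∑ i, b i * (P / a i)) + bn * α = -1)
    (Δ : ℤ → ℤ)
    (hΔ : ∀ x : ℤ, Δ x = 1 + |e0| * x -
      ((∑ i, ⌈(x * b i : ℚ) / (a i : ℚ)⌉) + ⌈(x * bn : ℚ) / (an : ℚ)⌉)) :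
    ∀ s : ℤ,
      (∃ c : Fin (n - 1) → ℕ, s = ∑ i, (c i : ℤ) * (α / a i)) →
      ¬ (∃ c : Fin (n - 1) → ℕ, s - α = ∑ i, (c i : ℤ) * (α / a i)) →
      Δ (s * an) = 1 :=
  stmt_5_general n a an ha han α P hα hP e0 b bn hb hbn heq Δ hΔ
end

section
/- For every integer x, one has Δ(x + α) = Δ(x) + 1 if a_n divides x + α, and Δ(x + α) = Δ(x) otherwise. -/
/-!
Write `α = a_i c_i`. Then `(x + α) b_i / a_i = x b_i / a_i + c_i b_i`, so each of the first `n - 1`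
ceilings grows by the integer `c_i b_i`. The defining relation reads
`b_n α = a_n q - 1` with `q = |e_0| α - Σ c_i b_i`, so `(x + α) b_n / a_n = (x b_n - 1) / a_n + q`,
and lowering the numerator `x b_n` by one lowers the last ceiling exactly when `a_n ∣ x b_n - 1`,
i.e. (as `b_n` is invertible modulo `a_n`) when `a_n ∣ x + α`. The integer shifts cancel against
`|e_0| α`, leaving only this correction.
-/

theorem dvd_mul_sub_one_iff_dvd_add {R : Type*} [CommRing R] {a b q α : R}
    (h : b * α + 1 = a * q) (x : R) : a ∣ x * b - 1 ↔ a ∣ x + α := by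
  have hcop : IsCoprime a b := ⟨q, -α, by linear_combination -h⟩
  have hshift : (x + α) * b = x * b - 1 + a * q := by linear_combination h
  rw [← dvd_add_left (dvd_mul_right a q), ← hshift]
  exact ⟨hcop.dvd_of_dvd_mul_right, fun hd => hd.mul_right b⟩

section Ceil

variable {K : Type*} [Field K] [LinearOrder K] [IsStrictOrderedRing K] [FloorRing K]

theorem Int.ceil_add_mul_div {a : K} (ha : a ≠ 0) (y : K) (k : ℤ) :
    ⌈(y + a * k) / a⌉ = ⌈y / a⌉ + k := by
  rw [add_div, mul_div_cancel_left₀ _ ha, Int.ceil_add_intCast]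

theorem Int.ceil_intCast_div_of_pos_of_le {s a : ℤ} (hs : 0 < s) (hsa : s ≤ a) :
    ⌈(s : K) / a⌉ = 1 := by
  have ha : (0 : K) < a := by exact_mod_cast hs.trans_le hsa
  rw [Int.ceil_eq_iff]
  constructor
  · simpa using div_pos (by exact_mod_cast hs) ha
  · simpa [div_le_one ha] using hsa

theorem Int.ceil_intCast_div_eq_ceil_sub_one_div_add {a : ℤ} (ha : 0 < a) (m : ℤ) :
    ⌈(m : K) / a⌉ = ⌈((m - 1 : ℤ) : K) / a⌉ + if a ∣ m - 1 then 1 else 0 := by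
  have ha' : (a : K) ≠ 0 := by exact_mod_cast ha.ne'
  set k := (m - 1) / a
  set r := (m - 1) % a
  have hr0 : 0 ≤ r := Int.emod_nonneg _ ha.ne'
  have hra : r < a := Int.emod_lt_of_pos _ ha
  have hm : m - 1 = r + a * k := (Int.emod_add_mul_ediv (m - 1) a).symm
  have hshift : ∀ s : ℤ, ⌈((s + a * k : ℤ) : K) / a⌉ = ⌈(s : K) / a⌉ + k := fun s => by
    push_cast
    exact Int.ceil_add_mul_div ha' _ _
  have hupper : ∀ s : ℤ, 0 < s → s ≤ a → ⌈((s + a * k : ℤ) : K) / a⌉ = k + 1 := fun s hs hsa => by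
    rw [hshift, Int.ceil_intCast_div_of_pos_of_le hs hsa, add_comm]
  rw [show m = r + 1 + a * k by omega, show r + 1 + a * k - 1 = r + a * k by ring,
    hupper (r + 1) (by omega) (by omega)]
  rcases hr0.eq_or_lt with hr | hr
  · rw [if_pos ⟨k, by omega⟩, ← hr, hshift]
    simp
  · have hndvd : ¬a ∣ r + a * k := by
      rw [dvd_add_left (dvd_mul_right a k)]
      exact fun hd => hr.ne' (Int.eq_zero_of_dvd_of_nonneg_of_lt hr0 hra hd)
    rw [if_neg hndvd, hupper r hr hra.le]
    ring

theorem Int.ceil_intCast_add_mul_div_of_dvd {a α : ℤ} (ha : a ≠ 0) (hα : a ∣ α) (x b : ℤ) :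
    ⌈((x + α : ℤ) : K) * b / a⌉ = ⌈(x : K) * b / a⌉ + b * (α / a) := by
  obtain ⟨c, rfl⟩ := hα
  rw [Int.mul_ediv_cancel_left c ha, ← Int.ceil_add_mul_div (by exact_mod_cast ha : (a : K) ≠ 0)]
  push_cast
  ring_nf

theorem Int.ceil_add_mul_div_add_ite_dvd {a b q α : ℤ} (ha : 0 < a) (h : b * α + 1 = a * q)
    (x : ℤ) :
    ⌈((x + α : ℤ) : K) * b / a⌉ + (if a ∣ x + α then 1 else 0) = ⌈(x : K) * b / a⌉ + q := by
  have hnum : ((x + α : ℤ) : K) * b = ((x * b - 1 : ℤ) : K) + a * q := by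
    have hK := congrArg (Int.cast : ℤ → K) h
    push_cast at hK ⊢
    linear_combination hK
  rw [hnum, Int.ceil_add_mul_div (by exact_mod_cast ha.ne'), ← Int.cast_mul,
    Int.ceil_intCast_div_eq_ceil_sub_one_div_add ha (x * b)]
  simp only [dvd_mul_sub_one_iff_dvd_add h x]
  ring

end Ceil

theorem stmt_6_general (n : ℕ) (a : Fin (n - 1) → ℤ) (an : ℤ)
    (ha : ∀ i, 2 ≤ a i) (han : 2 ≤ an)
    (α P : ℤ) (hα : α = ∏ i, a i) (hP : P = α * an)
    (e0 : ℤ) (b : Fin (n - 1) → ℤ) (bn : ℤ)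
    (hb : ∀ i, 1 ≤ b i ∧ b i < a i) (hbn : 1 ≤ bn ∧ bn < an)
    (heq : e0 * P + (∑ i, b i * (P / a i)) + bn * α = -1)
    (Δ : ℤ → ℤ)
    (hΔ : ∀ x : ℤ, Δ x = 1 + |e0| * x -
      ((∑ i, ⌈(x * b i : ℚ) / (a i : ℚ)⌉) + ⌈(x * bn : ℚ) / (an : ℚ)⌉)) :
    ∀ x : ℤ,
      (an ∣ x + α → Δ (x + α) = Δ x + 1) ∧
      (¬ an ∣ x + α → Δ (x + α) = Δ x) := by
  intro x
  have hapos : ∀ i, 0 < a i := fun i => by linarith [ha i]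
  have hαpos : 0 < α := hα ▸ Finset.prod_pos fun i _ => hapos i
  have hdvd : ∀ i, a i ∣ α := fun i => hα ▸ Finset.dvd_prod_of_mem a (Finset.mem_univ i)
  set S := ∑ i, b i * (α / a i)
  have hrel : e0 * α * an + S * an + bn * α = -1 := by
    simp only [hP, Int.mul_ediv_assoc' _ (hdvd _), ← mul_assoc, ← Finset.sum_mul] at heq
    linear_combination heq
  have hS : 0 ≤ S := Finset.sum_nonneg fun i _ =>
    mul_nonneg (by linarith [hb i]) (Int.ediv_nonneg hαpos.le (hapos i).le)
  have he0 : e0 < 0 := by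
    by_contra! h
    nlinarith [mul_nonneg h (mul_pos hαpos (by linarith : 0 < an)).le]
  have hsum : ∑ i, ⌈((x + α : ℤ) : ℚ) * b i / a i⌉ = ∑ i, ⌈(x : ℚ) * b i / a i⌉ + S := by
    rw [← Finset.sum_add_distrib]
    exact Finset.sum_congr rfl fun i _ =>
      Int.ceil_intCast_add_mul_div_of_dvd (hapos i).ne' (hdvd i) x (b i)
  have hlast := Int.ceil_add_mul_div_add_ite_dvd (K := ℚ) (a := an) (b := bn) (α := α)
    (q := -e0 * α - S) (by linarith) (by linear_combination hrel) x
  have key : Δ (x + α) = Δ x + if an ∣ x + α then 1 else 0 := by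
    rw [hΔ, hΔ, hsum, abs_of_neg he0]
    linear_combination -hlast
  exact ⟨fun h => by simp [key, h], fun h => by simp [key, h]⟩

/-- For every integer x, Δ(x + α) = Δ(x) + 1 if a_n ∣ x + α, and Δ(x + α) = Δ(x) otherwise. -/
theorem stmt_6 (n : ℕ) (hn : 3 ≤ n) (a : Fin (n - 1) → ℤ) (an : ℤ)
    (ha : ∀ i, 2 ≤ a i) (han : 2 ≤ an)
    (hcop : ∀ i j, i ≠ j → IsCoprime (a i) (a j))
    (hcopn : ∀ i, IsCoprime (a i) an)
    (α P : ℤ) (hα : α = ∏ i, a i) (hP : P = α * an)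
    (e0 : ℤ) (b : Fin (n - 1) → ℤ) (bn : ℤ)
    (hb : ∀ i, 1 ≤ b i ∧ b i < a i) (hbn : 1 ≤ bn ∧ bn < an)
    (heq : e0 * P + (∑ i, b i * (P / a i)) + bn * α = -1)
    (Δ : ℤ → ℤ)
    (hΔ : ∀ x : ℤ, Δ x = 1 + |e0| * x -
      ((∑ i, ⌈(x * b i : ℚ) / (a i : ℚ)⌉) + ⌈(x * bn : ℚ) / (an : ℚ)⌉)) :
    ∀ x : ℤ,
      (an ∣ x + α → Δ (x + α) = Δ x + 1) ∧
      (¬ an ∣ x + α → Δ (x + α) = Δ x) :=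
  stmt_6_general n a an ha han α P hα hP e0 b bn hb hbn heq Δ hΔ
end

section
/- One has 12·s(b_n, a_n) − 12·s(b_n', a_n') = (a_n·a_n' − α² − 1)/(a_n·a_n'), where a_n' = a_n + α, b_n is the unique integer in [1, a_n) with α·b_n ≡ −1 (mod a_n), and b_n' is the unique integer in [1, a_n') with α·b_n' ≡ −1 (mod a_n'). -/
/-!
Since `α b ≡ -1 (mod a)`, reindexing the Dedekind sum by `i ↦ α i` gives `s(b, a) = -s(α, a)`.
Reciprocity `12 (s(h, k) + s(k, h)) = (h² + k² + 1) / (h k) - 3` trades `s(α, a)` for `s(a, α)`,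
which is the same for `a = a_n` and `a = a_n + α`; so the difference of the two sums is the
difference of the two explicit rational terms.

Reciprocity is proved elementarily: `12 k s(h, k)` is a polynomial in `h, k` minus
`12 Σ i ⌊h i / k⌋`, and the weighted floor sums for `(h, k)` and `(k, h)` are related by
counting the lattice points below the line `y = h x / k`.
-/

open Finset

def sawtooth (x : ℚ) : ℚ := if Int.fract x = 0 then 0 else Int.fract x - 1 / 2

theorem sawtooth_intCast_add (n : ℤ) (x : ℚ) : sawtooth (n + x) = sawtooth x := by
  simp only [sawtooth, Int.fract_intCast_add]

theorem sawtooth_neg (x : ℚ) : sawtooth (-x) = -sawtooth x := by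
  by_cases hx : Int.fract x = 0
  · simp [sawtooth, hx, Int.fract_neg_eq_zero]
  · rw [sawtooth, sawtooth, if_neg (mt Int.fract_neg_eq_zero.mp hx), if_neg hx, Int.fract_neg hx]
    ring

theorem sawtooth_of_mem_Ioo {x : ℚ} (hx : x ∈ Set.Ioo 0 1) : sawtooth x = x - 1 / 2 := by
  rw [sawtooth, Int.fract_eq_self.mpr ⟨hx.1.le, hx.2⟩, if_neg hx.1.ne']

theorem sawtooth_div_congr {a b k : ℤ} (h : a ≡ b [ZMOD k]) :
    sawtooth (a / k) = sawtooth (b / k) := by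
  rcases eq_or_ne k 0 with rfl | hk
  · simp
  obtain ⟨t, ht⟩ := h.dvd
  rw [show b = t * k + a by linarith, Int.cast_add, add_div, Int.cast_mul,
    mul_div_cancel_right₀ _ (by exact_mod_cast hk), sawtooth_intCast_add]

theorem sawtooth_div_of_not_dvd {a k : ℤ} (hk : 0 < k) (ha : ¬k ∣ a) :
    sawtooth (a / k) = (a % k : ℤ) / k - 1 / 2 := by
  rw [← sawtooth_div_congr (Int.mod_modEq a k), sawtooth_of_mem_Ioo]
  have hpos : 0 < a % k := (Int.emod_nonneg a hk.ne').lt_of_ne' (mt Int.dvd_of_emod_eq_zero ha)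
  have hlt : a % k < k := Int.emod_lt_of_pos a hk
  constructor
  · positivity
  · rw [div_lt_one (by exact_mod_cast hk)]; exact_mod_cast hlt

noncomputable def dedekindSum (h k : ℤ) : ℚ :=
  ∑ i ∈ Ico 1 k, sawtooth (i / k) * sawtooth (h * i / k)

theorem dedekindSum_add_self (h k : ℤ) : dedekindSum (h + k) k = dedekindSum h k := by
  refine sum_congr rfl fun i hi => ?_
  have hk : (k : ℚ) ≠ 0 := by have := mem_Ico.mp hi; exact_mod_cast (by omega : k ≠ 0)
  rw [show ((h + k : ℤ) : ℚ) * i / k = (i : ℤ) + h * i / k by push_cast; field_simp; ring,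
    sawtooth_intCast_add]

theorem sum_Ico_one_emod_mul_of_isCoprime {M : Type*} [AddCommMonoid M] (f : ℤ → M) {c k : ℤ}
    (hc : IsCoprime c k) : ∑ i ∈ Ico 1 k, f (c * i % k) = ∑ i ∈ Ico 1 k, f i := by
  obtain ⟨u, v, huv⟩ := hc
  have huc : u * c ≡ 1 [ZMOD k] := Int.modEq_iff_dvd.mpr ⟨v, by linarith⟩
  have hcu : c * u ≡ 1 [ZMOD k] := mul_comm u c ▸ huc
  have inv : ∀ x y, x * y ≡ 1 [ZMOD k] → ∀ i ∈ Ico 1 k, x * (y * i % k) % k = i := by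
    intro x y hxy i hi
    obtain ⟨h1, h2⟩ := mem_Ico.mp hi
    have : x * (y * i % k) ≡ i [ZMOD k] := calc
      x * (y * i % k) ≡ x * (y * i) [ZMOD k] := (Int.mod_modEq _ k).mul_left x
      _ = x * y * i := by ring
      _ ≡ 1 * i [ZMOD k] := hxy.mul_right i
      _ = i := one_mul i
    rw [this, Int.emod_eq_of_lt (by omega) h2]
  have maps : ∀ x y, x * y ≡ 1 [ZMOD k] → ∀ i ∈ Ico 1 k, y * i % k ∈ Ico 1 k := by
    intro x y hxy i hi
    obtain ⟨h1, h2⟩ := mem_Ico.mp hi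
    have hk : 0 < k := by omega
    refine mem_Ico.mpr ⟨?_, Int.emod_lt_of_pos _ hk⟩
    have hne : y * i % k ≠ 0 := fun h0 => by have := inv x y hxy i hi; simp [h0] at this; omega
    have := Int.emod_nonneg (y * i) hk.ne'
    omega
  exact sum_nbij' (fun i => c * i % k) (fun j => u * j % k) (maps u c huc) (maps c u hcu)
    (inv u c huc) (inv c u hcu) fun _ _ => rfl

theorem isCoprime_of_mul_modEq_neg_one {a b c : ℤ} (h : c * b ≡ -1 [ZMOD a]) :
    IsCoprime c a := by
  obtain ⟨t, ht⟩ := h.dvd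
  exact ⟨-b, -t, by linarith⟩

theorem dedekindSum_of_mul_modEq_neg_one {a b c : ℤ} (hb : c * b ≡ -1 [ZMOD a]) :
    dedekindSum b a = -dedekindSum c a := by
  rw [dedekindSum, ← sum_Ico_one_emod_mul_of_isCoprime _ (isCoprime_of_mul_modEq_neg_one hb),
    dedekindSum, ← sum_neg_distrib]
  refine sum_congr rfl fun i _ => ?_
  have hbi : b * (c * i % a) ≡ -i [ZMOD a] := calc
    b * (c * i % a) ≡ b * (c * i) [ZMOD a] := (Int.mod_modEq _ a).mul_left b
    _ = c * b * i := by ring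
    _ ≡ -1 * i [ZMOD a] := hb.mul_right i
    _ = -i := by ring
  rw [← Int.cast_mul, sawtooth_div_congr hbi, sawtooth_div_congr (Int.mod_modEq _ a),
    Int.cast_neg, neg_div, sawtooth_neg, Int.cast_mul]
  ring

theorem sum_Ico_add_one_right {M : Type*} [AddCommMonoid M] (f : ℤ → M) {a b : ℤ} (hab : a ≤ b) :
    ∑ i ∈ Ico a (b + 1), f i = ∑ i ∈ Ico a b, f i + f b := by
  rw [Ico_add_one_right_eq_Icc, ← Ico_insert_right hab, sum_insert right_notMem_Ico, add_comm]

theorem two_mul_sum_Ico_one_id {n : ℤ} (hn : 1 ≤ n) : 2 * ∑ i ∈ Ico 1 n, i = n * (n - 1) := by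
  induction n, hn using Int.leInduction with
  | base => simp
  | succ n hn ih => rw [sum_Ico_add_one_right _ hn, mul_add, ih]; ring

theorem six_mul_sum_Ico_one_sq {n : ℤ} (hn : 1 ≤ n) :
    6 * ∑ i ∈ Ico 1 n, i ^ 2 = n * (n - 1) * (2 * n - 1) := by
  induction n, hn using Int.leInduction with
  | base => simp
  | succ n hn ih => rw [sum_Ico_add_one_right _ hn, mul_add, ih]; ring

section Reciprocity

variable {h k : ℤ}

theorem sum_ediv_mul_ediv_add_one (hh : 0 < h) (hk : 0 < k) (hc : IsCoprime h k) :
    ∑ i ∈ Ico 1 k, h * i / k * (h * i / k + 1) = 2 * ∑ j ∈ Ico 1 h, j * (k - 1 - k * j / h) := by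
  -- Both sides sum `j` over the lattice points `1 ≤ i < k`, `1 ≤ j < h` with `k j < h i`;
  -- by coprimality no such point lies on the line `k j = h i`.
  have hmem : ∀ i j, i ∈ Ico 1 k ∧ j ∈ Ico 1 (h * i / k + 1) ↔
      i ∈ Ico (k * j / h + 1) k ∧ j ∈ Ico 1 h := by
    intro i j
    simp only [mem_Ico]
    rw [Int.lt_add_one_iff, Int.le_ediv_iff_mul_le hk, Int.add_one_le_iff,
      Int.ediv_lt_iff_lt_mul hh]
    constructor
    · rintro ⟨⟨hi, hik⟩, hj, hji⟩
      have hne : j * k ≠ h * i := fun heq => by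
        have hdvd : k ∣ h * i := ⟨j, by linarith⟩
        have := Int.le_of_dvd (by omega) (hc.symm.dvd_of_dvd_mul_left hdvd)
        omega
      refine ⟨⟨by linarith [lt_of_le_of_ne hji hne], hik⟩, hj, ?_⟩
      nlinarith
    · rintro ⟨⟨hji, hik⟩, hj, hjh⟩
      refine ⟨⟨?_, hik⟩, hj, by linarith⟩
      nlinarith
  calc ∑ i ∈ Ico 1 k, h * i / k * (h * i / k + 1)
      = ∑ i ∈ Ico 1 k, 2 * ∑ j ∈ Ico 1 (h * i / k + 1), j := by
        refine sum_congr rfl fun i hi => ?_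
        have : 0 ≤ h * i / k := Int.ediv_nonneg (by nlinarith [(mem_Ico.mp hi).1]) hk.le
        rw [two_mul_sum_Ico_one_id (by omega)]; ring
    _ = 2 * ∑ j ∈ Ico 1 h, ∑ _i ∈ Ico (k * j / h + 1) k, j := by rw [← mul_sum, sum_comm' hmem]
    _ = 2 * ∑ j ∈ Ico 1 h, j * (k - 1 - k * j / h) := by
        refine congrArg _ (sum_congr rfl fun j hj => ?_)
        have : k * j / h < k := (Int.ediv_lt_iff_lt_mul hh).mpr (by nlinarith [mem_Ico.mp hj])
        rw [sum_const, Int.card_Ico, nsmul_eq_mul, mul_comm]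
        congr 1
        omega

theorem sum_mul_ediv_reciprocity (hh : 0 < h) (hk : 0 < k) (hc : IsCoprime h k) :
    12 * (h * ∑ i ∈ Ico 1 k, i * (h * i / k) + k * ∑ j ∈ Ico 1 h, j * (k * j / h)) =
      (h - 1) * (k - 1) * (8 * h * k - h - k - 1) := by
  have residues : ∑ i ∈ Ico 1 k, (h * i - k * (h * i / k)) = ∑ i ∈ Ico 1 k, i := by
    simpa only [id, Int.emod_def] using sum_Ico_one_emod_mul_of_isCoprime id hc
  have residues_sq :
      ∑ i ∈ Ico 1 k, (h * i - k * (h * i / k)) ^ 2 = ∑ i ∈ Ico 1 k, i ^ 2 := by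
    simpa only [Int.emod_def] using sum_Ico_one_emod_mul_of_isCoprime (· ^ 2) hc
  have lin : h * ∑ i ∈ Ico 1 k, i - k * ∑ i ∈ Ico 1 k, h * i / k = ∑ i ∈ Ico 1 k, i := by
    refine Eq.trans ?_ residues
    rw [mul_sum, mul_sum, ← sum_sub_distrib]
  have quad : h ^ 2 * ∑ i ∈ Ico 1 k, i ^ 2 - 2 * h * k * ∑ i ∈ Ico 1 k, i * (h * i / k)
      + k ^ 2 * ∑ i ∈ Ico 1 k, (h * i / k) ^ 2 = ∑ i ∈ Ico 1 k, i ^ 2 := by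
    refine Eq.trans ?_ residues_sq
    rw [mul_sum, mul_sum, mul_sum, ← sum_sub_distrib, ← sum_add_distrib]
    exact sum_congr rfl fun i _ => by ring
  have count : ∑ i ∈ Ico 1 k, (h * i / k) ^ 2 + ∑ i ∈ Ico 1 k, h * i / k =
      2 * ((k - 1) * ∑ j ∈ Ico 1 h, j - ∑ j ∈ Ico 1 h, j * (k * j / h)) := by
    rw [← sum_add_distrib, mul_sum, ← sum_sub_distrib]
    convert sum_ediv_mul_ediv_add_one hh hk hc using 1
    · exact sum_congr rfl fun i _ => by ring
    · exact congrArg _ (sum_congr rfl fun j _ => by ring)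
  have key : k * (12 * (h * ∑ i ∈ Ico 1 k, i * (h * i / k) + k * ∑ j ∈ Ico 1 h, j * (k * j / h)))
      = k * ((h - 1) * (k - 1) * (8 * h * k - h - k - 1)) := by
    linear_combination (-6 : ℤ) * quad + 6 * k * lin + 6 * k ^ 2 * count
      + (-3 * k * (h - 1)) * two_mul_sum_Ico_one_id hk
      + (h ^ 2 - 1) * six_mul_sum_Ico_one_sq hk
      + 6 * k ^ 2 * (k - 1) * two_mul_sum_Ico_one_id hh
  exact mul_left_cancel₀ hk.ne' key

theorem four_mul_sq_mul_sawtooth_mul_sawtooth (hc : IsCoprime h k) {i : ℤ} (hi : i ∈ Ico 1 k) :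
    4 * (k : ℚ) ^ 2 * (sawtooth (i / k) * sawtooth (h * i / k)) =
      ((2 * i - k) * (2 * (h * i % k) - k) : ℤ) := by
  obtain ⟨hi1, hik⟩ := mem_Ico.mp hi
  have hk : 0 < k := by omega
  have hki : ¬k ∣ i := fun hd => by have := Int.le_of_dvd (by omega) hd; omega
  have hkhi : ¬k ∣ h * i := fun hd => hki (hc.symm.dvd_of_dvd_mul_left hd)
  rw [← Int.cast_mul h i, sawtooth_div_of_not_dvd hk hkhi, sawtooth_div_of_not_dvd hk hki,
    Int.emod_eq_of_lt (by omega) hik]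
  have : (k : ℚ) ≠ 0 := by exact_mod_cast hk.ne'
  push_cast
  field_simp
  ring

theorem twelve_mul_dedekindSum (hk : 0 < k) (hc : IsCoprime h k) :
    12 * k * dedekindSum h k = ((2 * h * (k - 1) * (2 * k - 1) - 3 * k * (k - 1)
      - 12 * ∑ i ∈ Ico 1 k, i * (h * i / k) : ℤ) : ℚ) := by
  have residues : ∑ i ∈ Ico 1 k, h * i % k = ∑ i ∈ Ico 1 k, i :=
    sum_Ico_one_emod_mul_of_isCoprime id hc
  have expand : ∑ i ∈ Ico 1 k, (2 * i - k) * (2 * (h * i % k) - k) =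
      4 * h * ∑ i ∈ Ico 1 k, i ^ 2 - 4 * k * ∑ i ∈ Ico 1 k, i * (h * i / k)
        - 2 * k * ∑ i ∈ Ico 1 k, i - 2 * k * ∑ i ∈ Ico 1 k, h * i % k + (k - 1) * k ^ 2 := by
    have hcard : ((Ico 1 k).card : ℤ) = k - 1 := by rw [Int.card_Ico]; omega
    rw [← hcard, ← nsmul_eq_mul, ← sum_const, mul_sum, mul_sum, mul_sum, mul_sum,
      ← sum_sub_distrib, ← sum_sub_distrib, ← sum_sub_distrib, ← sum_add_distrib]
    exact sum_congr rfl fun i _ => by linear_combination (4 * i) * Int.emod_def (h * i) k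
  have hint : 3 * ∑ i ∈ Ico 1 k, (2 * i - k) * (2 * (h * i % k) - k) = k * (2 * h * (k - 1) *
      (2 * k - 1) - 3 * k * (k - 1) - 12 * ∑ i ∈ Ico 1 k, i * (h * i / k)) := by
    rw [expand, residues]
    linear_combination 2 * h * six_mul_sum_Ico_one_sq hk - 6 * k * two_mul_sum_Ico_one_id hk
  have hsum : 4 * (k : ℚ) ^ 2 * dedekindSum h k =
      ((∑ i ∈ Ico 1 k, (2 * i - k) * (2 * (h * i % k) - k) : ℤ) : ℚ) := by
    rw [dedekindSum, mul_sum, Int.cast_sum]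
    exact sum_congr rfl fun i hi => four_mul_sq_mul_sawtooth_mul_sawtooth hc hi
  refine mul_left_cancel₀ (by exact_mod_cast hk.ne' : (k : ℚ) ≠ 0) ?_
  rw [show (k : ℚ) * (12 * k * dedekindSum h k) = 3 * (4 * k ^ 2 * dedekindSum h k) by ring, hsum]
  exact_mod_cast hint

theorem dedekindSum_add_dedekindSum (hh : 0 < h) (hk : 0 < k) (hc : IsCoprime h k) :
    dedekindSum h k + dedekindSum k h = ((h : ℚ) / k + k / h + 1 / (h * k)) / 12 - 1 / 4 := by
  have hh0 : (h : ℚ) ≠ 0 := by exact_mod_cast hh.ne'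
  have hk0 : (k : ℚ) ≠ 0 := by exact_mod_cast hk.ne'
  have hhk := twelve_mul_dedekindSum hk hc
  have hkh := twelve_mul_dedekindSum hh hc.symm
  have floorSums := congrArg (Int.cast : ℤ → ℚ) (sum_mul_ediv_reciprocity hh hk hc)
  push_cast at hhk hkh floorSums
  have key : 12 * h * k * (dedekindSum h k + dedekindSum k h) =
      (h ^ 2 + k ^ 2 + 1 - 3 * h * k : ℚ) := by
    linear_combination (h : ℚ) * hhk + k * hkh - floorSums
  field_simp
  linear_combination 4 * key

end Reciprocity

theorem stmt_15_general (α an : ℤ) (hα2 : 2 ≤ α) (han : 2 ≤ an)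
    (an' : ℤ) (han' : an' = an + α)
    (bn : ℤ) (hbn : 1 ≤ bn ∧ bn < an ∧ α * bn ≡ -1 [ZMOD an])
    (bn' : ℤ) (hbn' : 1 ≤ bn' ∧ bn' < an' ∧ α * bn' ≡ -1 [ZMOD an'])
    (saw : ℚ → ℚ)
    (hsaw : ∀ x : ℚ, saw x = if Int.fract x = 0 then 0 else x - ⌊x⌋ - 1/2)
    (ded : ℤ → ℤ → ℚ)
    (hded : ∀ h k : ℤ, ded h k =
      ∑ i ∈ Finset.Ico (1 : ℤ) k, saw ((i : ℚ) / (k : ℚ)) * saw ((h * i : ℚ) / (k : ℚ))) :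
    12 * ded bn an - 12 * ded bn' an' =
      ((an * an' - α ^ 2 - 1 : ℤ) : ℚ) / ((an * an' : ℤ) : ℚ) := by
  -- `Int.fract x` unfolds to `x - ⌊x⌋`, so `hsaw` is literally the definition of `sawtooth`.
  obtain rfl : saw = sawtooth := funext hsaw
  obtain rfl : ded = dedekindSum := funext₂ hded
  subst han'
  have hα : 0 < α := by omega
  have recip :=
    dedekindSum_add_dedekindSum hα (by omega) (isCoprime_of_mul_modEq_neg_one hbn.2.2)
  have recip' :=
    dedekindSum_add_dedekindSum hα (by omega) (isCoprime_of_mul_modEq_neg_one hbn'.2.2)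
  rw [dedekindSum_add_self] at recip'
  rw [dedekindSum_of_mul_modEq_neg_one hbn.2.2, dedekindSum_of_mul_modEq_neg_one hbn'.2.2,
    show ∀ x y z : ℚ, 12 * -x - 12 * -y = 12 * ((y + z) - (x + z)) by intros; ring, recip, recip']
  have : (α : ℚ) ≠ 0 := by exact_mod_cast hα.ne'
  have : (an : ℚ) ≠ 0 := by exact_mod_cast (by omega : an ≠ 0)
  have : (an : ℚ) + α ≠ 0 := by exact_mod_cast (by omega : an + α ≠ 0)
  push_cast
  field_simp
  ring

/-- `12·s(b_n, a_n) − 12·s(b_n', a_n') = (a_n·a_n' − α² − 1)/(a_n·a_n')`,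
where `a_n' = a_n + α`, `b_n` is the unique integer in `[1, a_n)` with
`α·b_n ≡ −1 (mod a_n)`, and `b_n'` is the unique integer in `[1, a_n')` with
`α·b_n' ≡ −1 (mod a_n')`.  Here `s(h,k) = Σ_{i=1}^{k−1} ⟨i/k⟩·⟨h·i/k⟩` is the Dedekind
sum, `⟨x⟩` the sawtooth function (`0` for `x ∈ ℤ`, else `x − ⌊x⌋ − 1/2`). -/
theorem stmt_15 (α an : ℤ) (hα2 : 2 ≤ α) (han : 2 ≤ an)
    (hcop : IsCoprime α an)
    (an' : ℤ) (han' : an' = an + α)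
    (bn : ℤ) (hbn : 1 ≤ bn ∧ bn < an ∧ α * bn ≡ -1 [ZMOD an])
    (bn' : ℤ) (hbn' : 1 ≤ bn' ∧ bn' < an' ∧ α * bn' ≡ -1 [ZMOD an'])
    (saw : ℚ → ℚ)
    (hsaw : ∀ x : ℚ, saw x = if Int.fract x = 0 then 0 else x - ⌊x⌋ - 1/2)
    (ded : ℤ → ℤ → ℚ)
    (hded : ∀ h k : ℤ, ded h k =
      ∑ i ∈ Finset.Ico (1 : ℤ) k, saw ((i : ℚ) / (k : ℚ)) * saw ((h * i : ℚ) / (k : ℚ))) :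
    12 * ded bn an - 12 * ded bn' an' =
      ((an * an' - α ^ 2 - 1 : ℤ) : ℚ) / ((an * an' : ℤ) : ℚ) :=
  stmt_15_general α an hα2 han an' han' bn hbn bn' hbn' saw hsaw ded hded
end
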